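/- arXiv:2011.11618 — 6 statements merged into one kernel-verified Lean document; each statement's English description precedes it below -/
import Mathlib

section
/- For every finite sequence X of numbers in [0,1] with Sum(X) ≤ 1, we have ∑_{x ∈ X} f_k(x) ≤ max(μ, 2). In particular, if μ ≥ 2 then the max-knapsack-profit of f_k equals μ. -/
/-!
Every feasible item contributes at most `max μ 2` times its size: on `[0, 1/k]` the profit is
`μ x`, and an item `x ∈ (1/(j+1), 1/j]` earns `1/j ≤ 2x` because `j + 1 ≤ 2j`. Summing over a
sequence of total size at most `1` gives the bound, and `k` copies of `1/k` earn exactly `μ`.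
-/

/-- The max-knapsack-profit (LP(k, μ)): supremum of ∑ f(xᵢ) over finite
sequences with entries in [0,1] and sum at most 1. -/
noncomputable def LPopt (f : ℝ → ℝ) : ℝ :=
  sSup {s | ∃ n : ℕ, ∃ X : Fin n → ℝ,
    (∀ i, X i ∈ Set.Icc (0 : ℝ) 1) ∧ (∑ i, X i) ≤ 1 ∧ s = ∑ i, f (X i)}

lemma one_le_floor_one_div {x : ℝ} (hx0 : 0 < x) (hx1 : x ≤ 1) : 1 ≤ ⌊1 / x⌋₊ :=
  (Nat.one_le_floor_iff _).2 (one_le_one_div hx0 hx1)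

lemma mem_Ioc_one_div_floor_one_div {x : ℝ} (hx0 : 0 < x) (hx1 : x ≤ 1) :
    x ∈ Set.Ioc (1 / ((⌊1 / x⌋₊ : ℝ) + 1)) (1 / (⌊1 / x⌋₊ : ℝ)) := by
  have hj : (0 : ℝ) < ⌊1 / x⌋₊ := by exact_mod_cast one_le_floor_one_div hx0 hx1
  refine ⟨(one_div_lt (by positivity) hx0).2 (Nat.lt_floor_add_one _), ?_⟩
  exact (le_one_div hx0 hj).2 (Nat.floor_le (by positivity))

lemma one_div_le_two_mul_of_mem_Ioc {j : ℕ} (hj : 1 ≤ j) {x : ℝ}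
    (hx : x ∈ Set.Ioc (1 / ((j : ℝ) + 1)) (1 / (j : ℝ))) : 1 / (j : ℝ) ≤ 2 * x := by
  have hj' : (1 : ℝ) ≤ j := by exact_mod_cast hj
  calc 1 / (j : ℝ) = 2 * (1 / (2 * j)) := by field_simp
    _ ≤ 2 * (1 / ((j : ℝ) + 1)) := by gcongr; linarith
    _ ≤ 2 * x := by linarith [hx.1]

lemma le_max_mul_of_staircase {k : ℕ} {μ : ℝ} {f : ℝ → ℝ} (hk : 1 ≤ k)
    (hf1 : ∀ j : ℕ, 1 ≤ j → j ≤ k - 1 →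
      ∀ x ∈ Set.Ioc (1 / ((j : ℝ) + 1)) (1 / (j : ℝ)), f x = 1 / (j : ℝ))
    (hf2 : ∀ x ∈ Set.Icc (0 : ℝ) (1 / (k : ℝ)), f x = μ * x)
    {x : ℝ} (hx : x ∈ Set.Icc (0 : ℝ) 1) : f x ≤ max μ 2 * x := by
  obtain ⟨hx0, hx1⟩ := hx
  by_cases hxk : x ≤ 1 / (k : ℝ)
  · rw [hf2 x ⟨hx0, hxk⟩]
    exact mul_le_mul_of_nonneg_right (le_max_left μ 2) hx0
  rw [not_le] at hxk
  have hkpos : (0 : ℝ) < k := by exact_mod_cast hk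
  have hxpos : 0 < x := lt_trans (by positivity) hxk
  have hj := one_le_floor_one_div hxpos hx1
  have hjk : ⌊1 / x⌋₊ < k :=
    (Nat.floor_lt (by positivity)).2 ((one_div_lt hxpos hkpos).2 hxk)
  have hmem := mem_Ioc_one_div_floor_one_div hxpos hx1
  rw [hf1 _ hj (by omega) x hmem]
  calc 1 / (⌊1 / x⌋₊ : ℝ) ≤ 2 * x := one_div_le_two_mul_of_mem_Ioc hj hmem
    _ ≤ max μ 2 * x := mul_le_mul_of_nonneg_right (le_max_right μ 2) hx0

lemma sum_le_of_le_mul {f : ℝ → ℝ} {c : ℝ} (hc : 0 ≤ c)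
    (hf : ∀ x ∈ Set.Icc (0 : ℝ) 1, f x ≤ c * x) {n : ℕ} {X : Fin n → ℝ}
    (hX : ∀ i, X i ∈ Set.Icc (0 : ℝ) 1) (hsum : ∑ i, X i ≤ 1) : ∑ i, f (X i) ≤ c :=
  calc ∑ i, f (X i) ≤ ∑ i, c * X i := Finset.sum_le_sum fun i _ => hf _ (hX i)
    _ = c * ∑ i, X i := (Finset.mul_sum _ _ _).symm
    _ ≤ c := mul_le_of_le_one_right hc hsum

lemma sum_uniform_eq {k : ℕ} (hk : 1 ≤ k) {μ : ℝ} {f : ℝ → ℝ}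
    (hf : f (1 / (k : ℝ)) = μ * (1 / k)) :
    ∑ _i : Fin k, (1 / (k : ℝ)) = 1 ∧ ∑ _i : Fin k, f (1 / (k : ℝ)) = μ := by
  have hk0 : (k : ℝ) ≠ 0 := by positivity
  simp only [Finset.sum_const, Finset.card_univ, Fintype.card_fin, nsmul_eq_mul, hf]
  constructor <;> field_simp

theorem LP_upper_bound_general (k : ℕ) (μ : ℝ) (f : ℝ → ℝ)
    (hk : 1 ≤ k)
    (hf1 : ∀ j : ℕ, 1 ≤ j → j ≤ k - 1 →
      ∀ x ∈ Set.Ioc (1 / ((j : ℝ) + 1)) (1 / (j : ℝ)), f x = 1 / (j : ℝ))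
    (hf2 : ∀ x ∈ Set.Icc (0 : ℝ) (1 / (k : ℝ)), f x = μ * x) :
    (∀ n : ℕ, ∀ X : Fin n → ℝ,
      (∀ i, X i ∈ Set.Icc (0 : ℝ) 1) → (∑ i, X i) ≤ 1 → (∑ i, f (X i)) ≤ max μ 2) ∧
    (2 ≤ μ → LPopt f = μ) := by
  have bound : ∀ n : ℕ, ∀ X : Fin n → ℝ,
      (∀ i, X i ∈ Set.Icc (0 : ℝ) 1) → (∑ i, X i) ≤ 1 → (∑ i, f (X i)) ≤ max μ 2 :=
    fun _ _ hX hsum => sum_le_of_le_mul (by positivity)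
      (fun _ hx => le_max_mul_of_staircase hk hf1 hf2 hx) hX hsum
  refine ⟨bound, fun hμ2 => IsGreatest.csSup_eq ⟨?_, ?_⟩⟩
  · have hkinv : (1 : ℝ) / k ∈ Set.Icc 0 1 :=
      ⟨by positivity, (div_le_one (by positivity)).2 (by exact_mod_cast hk)⟩
    obtain ⟨hsum, hval⟩ := sum_uniform_eq hk (hf2 _ ⟨hkinv.1, le_rfl⟩)
    exact ⟨k, fun _ => 1 / (k : ℝ), fun _ => hkinv, hsum.le, hval.symm⟩
  · rintro s ⟨n, X, hX, hsum, rfl⟩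
    exact max_eq_left hμ2 ▸ bound n X hX hsum

theorem LP_upper_bound (k : ℕ) (μ : ℝ) (f : ℝ → ℝ)
    (hk : 1 ≤ k) (hμ : μ ∈ Set.Icc (0 : ℝ) k)
    (hf1 : ∀ j : ℕ, 1 ≤ j → j ≤ k - 1 →
      ∀ x ∈ Set.Ioc (1 / ((j : ℝ) + 1)) (1 / (j : ℝ)), f x = 1 / (j : ℝ))
    (hf2 : ∀ x ∈ Set.Icc (0 : ℝ) (1 / (k : ℝ)), f x = μ * x) :
    (∀ n : ℕ, ∀ X : Fin n → ℝ,
      (∀ i, X i ∈ Set.Icc (0 : ℝ) 1) → (∑ i, X i) ≤ 1 → (∑ i, f (X i)) ≤ max μ 2) ∧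
    (2 ≤ μ → LPopt f = μ) :=
  LP_upper_bound_general k μ f hk hf1 hf2
end

section
/- For any finite sequence X in [0,1] with Sum(X) ≤ 1, letting z_j = |X ∩ (1/(j+1), 1/j]| for j ∈ {1,...,k-1}, we have ∑_{x∈X} f_k(x) ≤ μ + ∑_{j=1}^{k-1} z_j(1/j − μ/(j+1)). Consequently sup LP(k, μ) ≤ opt IP(k, μ). -/
/-!
Sort the items into the buckets `(1/(j+1), 1/j]`, `1 ≤ j < k`, and let `z j` count bucket `j`.
An item `x ≤ 1/k` has `f x = μ x`, and an item `x` of bucket `j` has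
`f x = 1/j ≤ μ x + (1/j - μ/(j+1))` since `x > 1/(j+1)`; summing over the items and using
`∑ xᵢ ≤ 1` gives the IP objective of `z`. The same inequality `1/(j+1) < x` shows
`∑ z j/(j+1) < ∑ xᵢ ≤ 1` as soon as some bucket is nonempty, so `z` is IP-feasible. Finally
`z j/j ≤ 2 z j/(j+1)` bounds the IP objective of feasible points by `μ + 2`, so the supremum
defining `IPopt` is over a bounded set.
-/

/-- cost of an integer solution to IP(k, μ). -/
noncomputable def IPcost (k : ℕ) (z : ℕ → ℕ) : ℝ :=
  ∑ j ∈ Finset.Icc 1 (k - 1), (z j : ℝ) / ((j : ℝ) + 1)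

/-- objective value of an integer solution to IP(k, μ). -/
noncomputable def IPscore (k : ℕ) (μ : ℝ) (z : ℕ → ℕ) : ℝ :=
  μ + ∑ j ∈ Finset.Icc 1 (k - 1), (z j : ℝ) * (1 / (j : ℝ) - μ / ((j : ℝ) + 1))

/-- optimum of IP(k, μ). -/
noncomputable def IPopt (k : ℕ) (μ : ℝ) : ℝ :=
  sSup {s | ∃ z : ℕ → ℕ, IPcost k z < 1 ∧ s = IPscore k μ z}

open Finset

lemma floor_inv_eq_iff_mem_Ioc {x : ℝ} (hx : 0 < x) {j : ℕ} (hj : 1 ≤ j) :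
    ⌊x⁻¹⌋₊ = j ↔ x ∈ Set.Ioc (1 / ((j : ℝ) + 1)) (1 / (j : ℝ)) := by
  have hj' : (0 : ℝ) < j := by exact_mod_cast hj
  rw [Nat.floor_eq_iff (inv_nonneg.2 hx.le), Set.mem_Ioc, one_div, one_div,
    inv_lt_comm₀ (by positivity) hx, le_inv_comm₀ hx hj', and_comm]

lemma exists_mem_Ioc_one_div {k : ℕ} (hk : 1 ≤ k) {x : ℝ}
    (hx : x ∈ Set.Ioc (1 / (k : ℝ)) 1) :
    ∃ j ∈ Icc 1 (k - 1), x ∈ Set.Ioc (1 / ((j : ℝ) + 1)) (1 / (j : ℝ)) := by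
  have hx0 : 0 < x := lt_trans (by positivity) hx.1
  have h1 : 1 ≤ ⌊x⁻¹⌋₊ :=
    Nat.le_floor (by simpa using one_le_inv_iff₀.2 ⟨hx0, hx.2⟩)
  have hk' : ⌊x⁻¹⌋₊ < k := Nat.floor_lt (inv_nonneg.2 hx0.le) |>.2 <| by
    rw [inv_lt_comm₀ hx0 (by positivity), ← one_div]; exact hx.1
  exact ⟨⌊x⁻¹⌋₊, mem_Icc.2 ⟨h1, by omega⟩, (floor_inv_eq_iff_mem_Ioc hx0 h1).1 rfl⟩

lemma eq_of_mem_Ioc_one_div {x : ℝ} {i j : ℕ} (hi1 : 1 ≤ i) (hj1 : 1 ≤ j)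
    (hi : x ∈ Set.Ioc (1 / ((i : ℝ) + 1)) (1 / (i : ℝ)))
    (hj : x ∈ Set.Ioc (1 / ((j : ℝ) + 1)) (1 / (j : ℝ))) : i = j := by
  have hx : 0 < x := lt_trans (by positivity) hi.1
  rw [← floor_inv_eq_iff_mem_Ioc hx hi1] at hi
  rw [← floor_inv_eq_iff_mem_Ioc hx hj1] at hj
  rw [← hi, hj]

noncomputable def bucketWeight (k : ℕ) (w : ℕ → ℝ) (x : ℝ) : ℝ :=
  ∑ j ∈ Icc 1 (k - 1), if x ∈ Set.Ioc (1 / ((j : ℝ) + 1)) (1 / (j : ℝ)) then w j else 0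

noncomputable def bucketCount {ι : Type*} (X : ι → ℝ) (j : ℕ) : ℕ :=
  {i | X i ∈ Set.Ioc (1 / ((j : ℝ) + 1)) (1 / (j : ℝ))}.ncard

lemma bucketWeight_of_mem {k j : ℕ} {x : ℝ} (w : ℕ → ℝ) (hj : j ∈ Icc 1 (k - 1))
    (hx : x ∈ Set.Ioc (1 / ((j : ℝ) + 1)) (1 / (j : ℝ))) : bucketWeight k w x = w j := by
  rw [bucketWeight, sum_eq_single_of_mem j hj, if_pos hx]
  intro i hi hij
  exact if_neg fun hx' => hij <| eq_of_mem_Ioc_one_div (mem_Icc.1 hi).1 (mem_Icc.1 hj).1 hx' hx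

lemma bucketWeight_of_le {k : ℕ} {x : ℝ} (w : ℕ → ℝ) (hx : x ≤ 1 / (k : ℝ)) :
    bucketWeight k w x = 0 := by
  refine sum_eq_zero fun j hj => if_neg fun hxj => ?_
  have hjk : (j : ℝ) + 1 ≤ k := by
    have := mem_Icc.1 hj
    exact_mod_cast (by omega : j + 1 ≤ k)
  linarith [hxj.1, one_div_le_one_div_of_le (by positivity) hjk]

lemma sum_bucketWeight {ι : Type*} [Fintype ι] (k : ℕ) (w : ℕ → ℝ) (X : ι → ℝ) :
    ∑ i, bucketWeight k w (X i) = ∑ j ∈ Icc 1 (k - 1), (bucketCount X j : ℝ) * w j := by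
  classical
  simp only [bucketWeight]
  rw [sum_comm]
  refine sum_congr rfl fun j _ => ?_
  rw [← sum_filter, sum_const, nsmul_eq_mul, bucketCount, Set.ncard_eq_toFinset_card',
    Set.toFinset_ofPred]

lemma IPscore_bucketCount {ι : Type*} [Fintype ι] (k : ℕ) (μ : ℝ) (X : ι → ℝ) :
    IPscore k μ (bucketCount X) =
      μ + ∑ i, bucketWeight k (fun j => 1 / (j : ℝ) - μ / ((j : ℝ) + 1)) (X i) := by
  rw [IPscore, sum_bucketWeight]

lemma IPcost_bucketCount {ι : Type*} [Fintype ι] (k : ℕ) (X : ι → ℝ) :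
    IPcost k (bucketCount X) = ∑ i, bucketWeight k (fun j => 1 / ((j : ℝ) + 1)) (X i) := by
  simp only [IPcost, sum_bucketWeight, div_eq_mul_one_div (bucketCount X _ : ℝ)]

lemma le_mul_add_bucketWeight {k : ℕ} {μ : ℝ} {f : ℝ → ℝ} (hk : 1 ≤ k) (hμ : 0 ≤ μ)
    (hf1 : ∀ j : ℕ, 1 ≤ j → j ≤ k - 1 →
      ∀ x ∈ Set.Ioc (1 / ((j : ℝ) + 1)) (1 / (j : ℝ)), f x = 1 / (j : ℝ))
    (hf2 : ∀ x ∈ Set.Icc (0 : ℝ) (1 / (k : ℝ)), f x = μ * x) {x : ℝ}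
    (hx : x ∈ Set.Icc (0 : ℝ) 1) :
    f x ≤ μ * x + bucketWeight k (fun j => 1 / (j : ℝ) - μ / ((j : ℝ) + 1)) x := by
  rcases le_or_gt x (1 / (k : ℝ)) with hxk | hxk
  · rw [hf2 x ⟨hx.1, hxk⟩, bucketWeight_of_le _ hxk, add_zero]
  · obtain ⟨j, hj, hxj⟩ := exists_mem_Ioc_one_div hk ⟨hxk, hx.2⟩
    rw [hf1 j (mem_Icc.1 hj).1 (mem_Icc.1 hj).2 x hxj, bucketWeight_of_mem _ hj hxj]
    have : μ / ((j : ℝ) + 1) ≤ μ * x := by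
      rw [div_eq_mul_one_div]; exact mul_le_mul_of_nonneg_left hxj.1.le hμ
    linarith

lemma bucketWeight_one_div_succ_eq_zero_or_lt {k : ℕ} {x : ℝ} (hk : 1 ≤ k)
    (hx : x ∈ Set.Icc (0 : ℝ) 1) :
    bucketWeight k (fun j => 1 / ((j : ℝ) + 1)) x = 0 ∨
      bucketWeight k (fun j => 1 / ((j : ℝ) + 1)) x < x := by
  rcases le_or_gt x (1 / (k : ℝ)) with hxk | hxk
  · exact .inl (bucketWeight_of_le _ hxk)
  · obtain ⟨j, hj, hxj⟩ := exists_mem_Ioc_one_div hk ⟨hxk, hx.2⟩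
    exact .inr ((bucketWeight_of_mem _ hj hxj).trans_lt hxj.1)

lemma sum_lt_one_of_eq_zero_or_lt {ι : Type*} [Fintype ι] {g X : ι → ℝ}
    (hX : ∀ i, 0 ≤ X i) (hsum : ∑ i, X i ≤ 1) (hg : ∀ i, g i = 0 ∨ g i < X i) :
    ∑ i, g i < 1 := by
  by_cases h : ∀ i, g i = 0
  · simp [h]
  · push Not at h
    obtain ⟨i₀, hi₀⟩ := h
    have hle : ∀ i ∈ univ, g i ≤ X i := fun i _ =>
      (hg i).elim (fun h => h ▸ hX i) le_of_lt
    exact (sum_lt_sum hle ⟨i₀, mem_univ _, (hg i₀).resolve_left hi₀⟩).trans_le hsum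

lemma IPcost_bucketCount_lt_one {ι : Type*} [Fintype ι] {k : ℕ} (hk : 1 ≤ k) {X : ι → ℝ}
    (hX : ∀ i, X i ∈ Set.Icc (0 : ℝ) 1) (hsum : ∑ i, X i ≤ 1) :
    IPcost k (bucketCount X) < 1 := by
  rw [IPcost_bucketCount]
  exact sum_lt_one_of_eq_zero_or_lt (fun i => (hX i).1) hsum
    fun i => bucketWeight_one_div_succ_eq_zero_or_lt hk (hX i)

lemma IPscore_le_add_two_mul_IPcost (k : ℕ) {μ : ℝ} (hμ : 0 ≤ μ) (z : ℕ → ℕ) :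
    IPscore k μ z ≤ μ + 2 * IPcost k z := by
  rw [IPscore, IPcost, mul_sum, add_le_add_iff_left]
  refine sum_le_sum fun j hj => ?_
  have hj1 : (1 : ℝ) ≤ j := by exact_mod_cast (mem_Icc.1 hj).1
  have hμj : 0 ≤ μ / ((j : ℝ) + 1) := by positivity
  have hj2 : 1 / (j : ℝ) ≤ 2 / (j + 1) := by
    rw [div_le_div_iff₀ (by positivity) (by positivity)]; linarith
  calc (z j : ℝ) * (1 / j - μ / (j + 1)) ≤ z j * (1 / j) := by gcongr; linarith
    _ ≤ z j * (2 / (j + 1)) := by gcongr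
    _ = 2 * (z j / (j + 1)) := by ring

lemma bddAbove_IPscore (k : ℕ) {μ : ℝ} (hμ : 0 ≤ μ) :
    BddAbove {s | ∃ z : ℕ → ℕ, IPcost k z < 1 ∧ s = IPscore k μ z} := by
  refine ⟨μ + 2, ?_⟩
  rintro s ⟨z, hz, rfl⟩
  linarith [IPscore_le_add_two_mul_IPcost k hμ z]

lemma sum_le_IPscore_bucketCount {ι : Type*} [Fintype ι] {k : ℕ} {μ : ℝ} {f : ℝ → ℝ}
    (hk : 1 ≤ k) (hμ : 0 ≤ μ)
    (hf1 : ∀ j : ℕ, 1 ≤ j → j ≤ k - 1 →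
      ∀ x ∈ Set.Ioc (1 / ((j : ℝ) + 1)) (1 / (j : ℝ)), f x = 1 / (j : ℝ))
    (hf2 : ∀ x ∈ Set.Icc (0 : ℝ) (1 / (k : ℝ)), f x = μ * x) {X : ι → ℝ}
    (hX : ∀ i, X i ∈ Set.Icc (0 : ℝ) 1) (hsum : ∑ i, X i ≤ 1) :
    ∑ i, f (X i) ≤ IPscore k μ (bucketCount X) := by
  set w := fun j : ℕ => 1 / (j : ℝ) - μ / ((j : ℝ) + 1)
  calc ∑ i, f (X i) ≤ ∑ i, (μ * X i + bucketWeight k w (X i)) :=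
        sum_le_sum fun i _ => le_mul_add_bucketWeight hk hμ hf1 hf2 (hX i)
    _ = μ * ∑ i, X i + ∑ i, bucketWeight k w (X i) := by rw [sum_add_distrib, mul_sum]
    _ ≤ μ + ∑ i, bucketWeight k w (X i) := by
        gcongr; exact mul_le_of_le_one_right hμ hsum
    _ = IPscore k μ (bucketCount X) := (IPscore_bucketCount k μ X).symm

theorem LP_le_IP (k : ℕ) (μ : ℝ) (f : ℝ → ℝ)
    (hk : 2 ≤ k) (hμ : μ ∈ Set.Icc (0 : ℝ) k)
    (hf1 : ∀ j : ℕ, 1 ≤ j → j ≤ k - 1 →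
      ∀ x ∈ Set.Ioc (1 / ((j : ℝ) + 1)) (1 / (j : ℝ)), f x = 1 / (j : ℝ))
    (hf2 : ∀ x ∈ Set.Icc (0 : ℝ) (1 / (k : ℝ)), f x = μ * x) :
    (∀ n : ℕ, ∀ X : Fin n → ℝ,
      (∀ i, X i ∈ Set.Icc (0 : ℝ) 1) → (∑ i, X i) ≤ 1 →
      ∀ z : ℕ → ℕ,
        (∀ j, z j = Set.ncard {i : Fin n |
          1 / ((j : ℝ) + 1) < X i ∧ X i ≤ 1 / (j : ℝ)}) →
        (∑ i, f (X i)) ≤ IPscore k μ z) ∧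
    LPopt f ≤ IPopt k μ := by
  have hk1 : 1 ≤ k := by omega
  refine ⟨fun n X hX hsum z hz => ?_, ?_⟩
  · obtain rfl : z = bucketCount X := funext hz
    exact sum_le_IPscore_bucketCount hk1 hμ.1 hf1 hf2 hX hsum
  · refine csSup_le ⟨0, 0, Fin.elim0, Fin.rec0, by simp, by simp⟩ ?_
    rintro s ⟨n, X, hX, hsum, rfl⟩
    exact (sum_le_IPscore_bucketCount hk1 hμ.1 hf1 hf2 hX hsum).trans <|
      le_csSup (bddAbove_IPscore k hμ.1) ⟨_, IPcost_bucketCount_lt_one hk1 hX hsum, rfl⟩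
end

section
/- Let z^(q) be the 0-1 vector with z_i = 1 iff i ∈ {r_1, ..., r_q} (where r_j are the harmonic numbers and r_q ≤ k−1). Then z^(q) is feasible for IP(k, μ), with cost(z^(q), k) = 1 − 1/r_{q+1}, and score(z^(q), k, μ) = S_{q+1} + (μ−1)/r_{q+1}, where S_t = ∑_{j=1}^t 1/r_j. -/
/-!
The indices `r 1 < r 2 < ⋯ < r q` are distinct, so the sums defining cost and score collapse to
sums over `t ∈ [1, q]` of the summands at `j = r t`. Since `r (t + 1) = r t * (r t + 1)`,
`1 / (r t + 1) = 1 / r t - 1 / r (t + 1)`, so the cost telescopes to `1 - 1 / r (q + 1)`,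
and the score is `μ + S_q - μ * (1 - 1 / r (q + 1))`.
-/

open Finset

lemma sum_indicator_image_mul {α β : Type*} [DecidableEq β] {s : Finset α} {A : Finset β}
    {g : α → β} (hg : Set.InjOn g s) (hsub : s.image g ⊆ A) (f : β → ℝ) :
    ∑ i ∈ A, ((if i ∈ s.image g then 1 else 0 : ℕ) : ℝ) * f i = ∑ t ∈ s, f (g t) := by
  simp_rw [Nat.cast_ite, Nat.cast_one, Nat.cast_zero, ite_mul, one_mul, zero_mul]
  rw [sum_ite_mem, inter_eq_right.mpr hsub, sum_image hg]

section Sylvester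

variable {r : ℕ → ℕ}

lemma sylvester_pos (hr1 : r 1 = 1) (hrec : ∀ j ≥ 1, r (j + 1) = r j * (r j + 1))
    {j : ℕ} (hj : 1 ≤ j) : 0 < r j := by
  induction j, hj using Nat.le_induction with
  | base => simp [hr1]
  | succ n hn ih => rw [hrec n hn]; positivity

lemma sylvester_strictMonoOn (hr1 : r 1 = 1) (hrec : ∀ j ≥ 1, r (j + 1) = r j * (r j + 1)) :
    StrictMonoOn r (Set.Ici 1) :=
  strictMonoOn_of_lt_add_one Set.ordConnected_Ici fun j _ hj _ => by
    rw [hrec j hj]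
    nlinarith [sylvester_pos hr1 hrec hj]

lemma sylvester_sum_inv_add_one (hr1 : r 1 = 1)
    (hrec : ∀ j ≥ 1, r (j + 1) = r j * (r j + 1)) (m : ℕ) :
    ∑ t ∈ Icc 1 m, ((r t : ℝ) + 1)⁻¹ = 1 - (r (m + 1) : ℝ)⁻¹ := by
  induction m with
  | zero => simp [hr1]
  | succ n ih =>
    have hn : (0 : ℝ) < r (n + 1) := by exact_mod_cast sylvester_pos hr1 hrec (by omega)
    rw [sum_Icc_succ_top (by omega), ih, hrec (n + 1) (by omega)]
    push_cast
    field_simp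
    ring

end Sylvester

theorem greedy_solution_props_general (k : ℕ) (μ : ℝ) (r : ℕ → ℕ) (q : ℕ)
    (hr1 : r 1 = 1) (hrec : ∀ j ≥ 1, r (j + 1) = r j * (r j + 1))
    (hrq : r q ≤ k - 1) :
    IPcost k (fun i => if i ∈ (Finset.Icc 1 q).image r then 1 else 0)
      = 1 - 1 / (r (q + 1) : ℝ) ∧
    IPcost k (fun i => if i ∈ (Finset.Icc 1 q).image r then 1 else 0) < 1 ∧
    IPscore k μ (fun i => if i ∈ (Finset.Icc 1 q).image r then 1 else 0)
      = (∑ j ∈ Finset.Icc 1 (q + 1), 1 / (r j : ℝ)) + (μ - 1) / (r (q + 1) : ℝ) := by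
  have hmono := sylvester_strictMonoOn hr1 hrec
  have hIcc : (Icc 1 q : Set ℕ) ⊆ Set.Ici 1 := fun t ht => (mem_Icc.mp ht).1
  have hsub : (Icc 1 q).image r ⊆ Icc 1 (k - 1) := by
    simp only [image_subset_iff, mem_Icc]
    exact fun t ht => ⟨sylvester_pos hr1 hrec ht.1,
      (hmono.monotoneOn ht.1 (ht.1.trans ht.2) ht.2).trans hrq⟩
  have hsum := sum_indicator_image_mul (hmono.injOn.mono hIcc) hsub
  have htel := sylvester_sum_inv_add_one hr1 hrec q
  have hcost : IPcost k (fun i => if i ∈ (Icc 1 q).image r then 1 else 0)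
      = 1 - 1 / (r (q + 1) : ℝ) := by
    simp_rw [IPcost, div_eq_mul_inv]
    rw [hsum, htel, one_mul]
  have hr_pos : (0 : ℝ) < r (q + 1) := by exact_mod_cast sylvester_pos hr1 hrec (by omega)
  refine ⟨hcost, hcost ▸ sub_lt_self 1 (by positivity), ?_⟩
  rw [IPscore, hsum, sum_sub_distrib, sum_Icc_succ_top (by omega)]
  simp_rw [div_eq_mul_inv μ, ← mul_sum, htel]
  ring

theorem greedy_solution_props (k : ℕ) (μ : ℝ) (r : ℕ → ℕ) (q : ℕ)
    (hk : 2 ≤ k)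
    (hr1 : r 1 = 1) (hrec : ∀ j ≥ 1, r (j + 1) = r j * (r j + 1))
    (hq : 1 ≤ q) (hrq : r q ≤ k - 1) :
    IPcost k (fun i => if i ∈ (Finset.Icc 1 q).image r then 1 else 0)
      = 1 - 1 / (r (q + 1) : ℝ) ∧
    IPcost k (fun i => if i ∈ (Finset.Icc 1 q).image r then 1 else 0) < 1 ∧
    IPscore k μ (fun i => if i ∈ (Finset.Icc 1 q).image r then 1 else 0)
      = (∑ j ∈ Finset.Icc 1 (q + 1), 1 / (r j : ℝ)) + (μ - 1) / (r (q + 1) : ℝ) :=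
  greedy_solution_props_general k μ r q hr1 hrec hrq
end

section
/- (Closed form for the harmonic knapsack IP) Let k ≥ 2 and 1 ≤ μ < 2. Let Q = max{j ≥ 1 : r_j ≤ ⌈1/max(μ−1, 1/k)⌉ − 1}. Then the optimum of IP(k, μ) equals ∑_{j=1}^{Q+1} 1/r_j + (μ−1)/r_{Q+1}. -/
/-!
View a feasible `z` as a multiset of items `j`, item `j` costing `1/(j+1)` and earning
`1/j - μ/(j+1)`. The Sylvester numbers are exactly the greedy choice: after taking
`r 1, …, r (q-1)` the remaining budget is `1/r q`, and `r q` is the smallest item that still fits.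
An exchange argument shows greedy is optimal: if a solution contains `r q`, remove it and recurse
with budget `1/r q - 1/(r q + 1) = 1/r (q+1)`; otherwise all its items exceed `r q`, and since
the gain-to-cost ratio `(j+1)/j - μ` decreases in `j`, they earn at most what `r q` alone earns.
Greedy stops at `r Q`, because items from `r (Q+1)` on have nonpositive gain (or do not exist,
being larger than `k - 1`); this is what the definition of `Q` encodes.
-/

open Finset

namespace IP

noncomputable def itemCost (j : ℕ) : ℝ := 1 / ((j : ℝ) + 1)

noncomputable def itemGain (μ : ℝ) (j : ℕ) : ℝ := 1 / (j : ℝ) - μ / ((j : ℝ) + 1)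

section Sylvester

variable {r : ℕ → ℕ}

theorem sylvester_pos (hr1 : r 1 = 1) (hrec : ∀ j ≥ 1, r (j + 1) = r j * (r j + 1))
    {j : ℕ} (hj : 1 ≤ j) : 0 < r j := by
  induction j, hj using Nat.le_induction with
  | base => omega
  | succ n hn ih => rw [hrec n hn]; positivity

theorem sylvester_monotoneOn (hrec : ∀ j ≥ 1, r (j + 1) = r j * (r j + 1)) :
    MonotoneOn r (Set.Ici 1) :=
  monotoneOn_of_le_succ Set.ordConnected_Ici fun j _ hj _ => by
    rw [Order.succ_eq_add_one, hrec j hj]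
    exact Nat.le_mul_of_pos_right _ (Nat.succ_pos _)

theorem sylvester_mem_Icc (hr1 : r 1 = 1) (hrec : ∀ j ≥ 1, r (j + 1) = r j * (r j + 1))
    {Q i : ℕ} (hi : i ∈ Icc 1 Q) : r i ∈ Icc 1 (r Q) := by
  obtain ⟨h1, hQ⟩ := mem_Icc.mp hi
  exact mem_Icc.mpr
    ⟨sylvester_pos hr1 hrec h1, sylvester_monotoneOn hrec h1 (h1.trans hQ : 1 ≤ Q) hQ⟩

theorem one_div_sylvester_succ (hr1 : r 1 = 1) (hrec : ∀ j ≥ 1, r (j + 1) = r j * (r j + 1))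
    {j : ℕ} (hj : 1 ≤ j) : 1 / (r (j + 1) : ℝ) = 1 / r j - itemCost (r j) := by
  have := sylvester_pos hr1 hrec hj
  rw [hrec j hj, itemCost]
  field_simp
  push_cast
  ring

theorem sum_itemCost_sylvester (hr1 : r 1 = 1) (hrec : ∀ j ≥ 1, r (j + 1) = r j * (r j + 1))
    (n : ℕ) : ∑ i ∈ Icc 1 n, itemCost (r i) = 1 - 1 / r (n + 1) := by
  induction n with
  | zero => simp [hr1]
  | succ n ih =>
    rw [sum_Icc_succ_top (by omega), ih, one_div_sylvester_succ hr1 hrec (j := n + 1) (by omega)]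
    ring

theorem add_sum_itemGain_sylvester (hr1 : r 1 = 1)
    (hrec : ∀ j ≥ 1, r (j + 1) = r j * (r j + 1)) (μ : ℝ) (Q : ℕ) :
    μ + ∑ i ∈ Icc 1 Q, itemGain μ (r i) =
      (∑ j ∈ Icc 1 (Q + 1), 1 / (r j : ℝ)) + (μ - 1) / r (Q + 1) := by
  have hsplit : ∑ i ∈ Icc 1 Q, itemGain μ (r i) =
      ∑ i ∈ Icc 1 Q, 1 / (r i : ℝ) - μ * ∑ i ∈ Icc 1 Q, itemCost (r i) := by
    simp only [itemGain, itemCost, sum_sub_distrib, mul_sum, mul_one_div]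
  rw [hsplit, sum_itemCost_sylvester hr1 hrec, sum_Icc_succ_top (by omega)]
  ring

end Sylvester

section Items

variable {μ : ℝ}

theorem itemGain_eq_mul_itemCost {j : ℕ} (hj : j ≠ 0) :
    itemGain μ j = (1 + 1 / j - μ) * itemCost j := by
  rw [itemGain, itemCost]
  field_simp

theorem itemGain_nonneg {j : ℕ} (hj : 0 < j) (h : (μ - 1) * j ≤ 1) : 0 ≤ itemGain μ j := by
  have : μ - 1 ≤ 1 / j := by rw [le_div_iff₀ (by positivity)]; exact h
  rw [itemGain_eq_mul_itemCost hj.ne', itemCost]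
  apply mul_nonneg <;> [linarith; positivity]

theorem itemGain_nonpos {j : ℕ} (hj : 0 < j) (h : 1 ≤ (μ - 1) * j) : itemGain μ j ≤ 0 := by
  have : 1 / j ≤ μ - 1 := by rw [div_le_iff₀ (by positivity)]; exact h
  rw [itemGain_eq_mul_itemCost hj.ne', itemCost]
  exact mul_nonpos_of_nonpos_of_nonneg (by linarith) (by positivity)

theorem itemCost_pos (j : ℕ) : 0 < itemCost j := by
  unfold itemCost
  positivity

theorem forall_mem_map_itemCost_nonneg (S : Multiset ℕ) : ∀ x ∈ S.map itemCost, 0 ≤ x :=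
  Multiset.forall_mem_map_iff.mpr fun j _ => (itemCost_pos j).le

theorem le_of_mem_of_sum_itemCost_lt {c : ℕ} (hc : 0 < c) {S : Multiset ℕ}
    (hS : (S.map itemCost).sum < 1 / c) {j : ℕ} (hj : j ∈ S) : c ≤ j := by
  have hle : itemCost j ≤ (S.map itemCost).sum :=
    Multiset.single_le_sum (forall_mem_map_itemCost_nonneg S) _ (Multiset.mem_map_of_mem _ hj)
  rw [itemCost] at hle
  have := (one_div_lt_one_div (by positivity) (by exact_mod_cast hc)).mp (hle.trans_lt hS)
  exact Nat.lt_add_one_iff.mp (by exact_mod_cast this)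

/-- The gain-to-cost ratio of items larger than `c` is at most `ρ = 1 + 1/(c+1) - μ`, and
`ρ / c ≤ itemGain μ c` because `μ ≥ 1`. -/
theorem sum_itemGain_le_of_lt (hμ : 1 ≤ μ) {c : ℕ} (hc : 0 < c) {S : Multiset ℕ}
    (hS : ∀ j ∈ S, c < j) (hcost : (S.map itemCost).sum < 1 / c) :
    (S.map (itemGain μ)).sum ≤ max 0 (itemGain μ c) := by
  set ρ : ℝ := 1 + 1 / ((c : ℝ) + 1) - μ
  have hterm : ∀ j ∈ S, itemGain μ j ≤ ρ * itemCost j := by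
    intro j hj
    have hcj : (c : ℝ) + 1 ≤ j := by exact_mod_cast hS j hj
    rw [itemGain_eq_mul_itemCost (by have := hS j hj; omega)]
    have : 1 / (j : ℝ) ≤ 1 / ((c : ℝ) + 1) := one_div_le_one_div_of_le (by positivity) hcj
    exact mul_le_mul_of_nonneg_right (by linarith) (itemCost_pos j).le
  have hsum := (Multiset.sum_map_le_sum_map _ _ hterm).trans_eq Multiset.sum_map_mul_left
  rcases le_or_gt ρ 0 with hρ | hρ
  · have hcost0 := Multiset.sum_nonneg (forall_mem_map_itemCost_nonneg S)
    exact le_max_of_le_left (hsum.trans (mul_nonpos_of_nonpos_of_nonneg hρ hcost0))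
  · refine le_max_of_le_right (hsum.trans ?_)
    have hc' : (0 : ℝ) < c := by exact_mod_cast hc
    have hgap : itemGain μ c - ρ * (1 / c) = (μ - 1) / (c * (c + 1)) := by
      simp only [itemGain, ρ]
      field_simp
      ring
    calc ρ * (S.map itemCost).sum ≤ ρ * (1 / c) := by gcongr
      _ ≤ itemGain μ c := by
        rw [← sub_nonneg, hgap]
        exact div_nonneg (by linarith) (by positivity)

theorem sum_itemGain_le_sylvester {r : ℕ → ℕ} (hμ : 1 ≤ μ) (hr1 : r 1 = 1)
    (hrec : ∀ j ≥ 1, r (j + 1) = r j * (r j + 1)) {Q : ℕ}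
    (hgreedy : ∀ i ∈ Icc 1 Q, 0 ≤ itemGain μ (r i)) {S : Multiset ℕ}
    (hlarge : ∀ j ∈ S, r (Q + 1) ≤ j → itemGain μ j ≤ 0) {q : ℕ} (hq : 1 ≤ q)
    (hqQ : q ≤ Q + 1) (hcost : (S.map itemCost).sum < 1 / r q) :
    (S.map (itemGain μ)).sum ≤ ∑ i ∈ Icc q Q, itemGain μ (r i) := by
  induction hd : Q + 1 - q generalizing q S with
  | zero =>
    obtain rfl : q = Q + 1 := by omega
    have hnonpos : ∀ j ∈ S, itemGain μ j ≤ 0 := fun j hj =>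
      hlarge j hj (le_of_mem_of_sum_itemCost_lt (sylvester_pos hr1 hrec hq) hcost hj)
    rw [Icc_eq_empty (by omega), sum_empty]
    simpa using Multiset.sum_map_le_sum_map _ (fun _ => (0 : ℝ)) hnonpos
  | succ d ih =>
    have hqQ' : q ≤ Q := by omega
    have hpos : 0 < r q := sylvester_pos hr1 hrec hq
    rw [Icc_eq_cons_Ioc hqQ', sum_cons, ← Icc_add_one_left_eq_Ioc]
    by_cases hmem : r q ∈ S
    · rw [← Multiset.cons_erase hmem, Multiset.map_cons, Multiset.sum_cons] at hcost ⊢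
      gcongr
      refine ih (fun j hj => hlarge j (Multiset.mem_of_mem_erase hj)) (by omega) (by omega) ?_
        (by omega)
      rw [one_div_sylvester_succ hr1 hrec hq]
      linarith
    · have hlt : ∀ j ∈ S, r q < j := fun j hj =>
        (le_of_mem_of_sum_itemCost_lt hpos hcost hj).lt_of_ne fun h => hmem (h ▸ hj)
      have hrest : 0 ≤ ∑ i ∈ Icc (q + 1) Q, itemGain μ (r i) :=
        sum_nonneg fun i hi => hgreedy i (by grind)
      exact (sum_itemGain_le_of_lt hμ hpos hlt hcost).trans
        (max_le (add_nonneg (hgreedy q (by grind)) hrest) (le_add_of_nonneg_right hrest))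

end Items

section Encoding

def itemsOf (k : ℕ) (z : ℕ → ℕ) : Multiset ℕ :=
  ∑ j ∈ Icc 1 (k - 1), Multiset.replicate (z j) j

variable {k : ℕ}

theorem sum_map_itemsOf (z : ℕ → ℕ) (f : ℕ → ℝ) :
    ((itemsOf k z).map f).sum = ∑ j ∈ Icc 1 (k - 1), (z j : ℝ) * f j := by
  rw [itemsOf, ← Multiset.coe_mapAddMonoidHom, map_sum, ← Multiset.coe_sumAddMonoidHom, map_sum]
  simp

theorem IPcost_eq_sum_itemsOf (z : ℕ → ℕ) :
    IPcost k z = ((itemsOf k z).map itemCost).sum := by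
  simp only [IPcost, sum_map_itemsOf, itemCost, mul_one_div]

theorem IPscore_eq_add_sum_itemsOf (μ : ℝ) (z : ℕ → ℕ) :
    IPscore k μ z = μ + ((itemsOf k z).map (itemGain μ)).sum := by
  rw [IPscore, sum_map_itemsOf]
  rfl

theorem mem_itemsOf {z : ℕ → ℕ} {j : ℕ} (hj : j ∈ itemsOf k z) : j ∈ Icc 1 (k - 1) := by
  obtain ⟨i, hi, hji⟩ := Multiset.mem_sum.mp hj
  rwa [Multiset.eq_of_mem_replicate hji]

theorem itemsOf_count {S : Multiset ℕ} (hS : ∀ j ∈ S, j ∈ Icc 1 (k - 1)) :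
    itemsOf k (S.count ·) = S := by
  ext a
  simp only [itemsOf, Multiset.count_sum', Multiset.count_replicate, sum_ite_eq']
  split_ifs with ha
  · rfl
  · exact (Multiset.count_eq_zero.mpr fun h => ha (hS a h)).symm

end Encoding

theorem le_ceil_one_div_sub_one_iff {m : ℝ} (hm : 0 < m) {n : ℕ} :
    n ≤ ⌈1 / m⌉₊ - 1 ↔ m * n < 1 := by
  rw [Nat.le_sub_one_iff_lt (Nat.ceil_pos.mpr (by positivity)), Nat.lt_ceil, lt_div_iff₀ hm,
    mul_comm]

theorem bounds_of_isGreatest_threshold {k : ℕ} (hk : 0 < k) {μ : ℝ} {r : ℕ → ℕ} {Q : ℕ}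
    (hQ : IsGreatest {j : ℕ | 1 ≤ j ∧
      r j ≤ ⌈1 / max (μ - 1) (1 / (k : ℝ))⌉₊ - 1} Q) :
    r Q < k ∧ (μ - 1) * r Q < 1 ∧ ∀ j < k, r (Q + 1) ≤ j → 1 ≤ (μ - 1) * j := by
  have hk' : (0 : ℝ) < k := by exact_mod_cast hk
  set m := max (μ - 1) (1 / (k : ℝ))
  have hm : 0 < m := lt_max_of_lt_right (by positivity)
  have hmax (x : ℝ) (hx : 0 ≤ x) : m * x = max ((μ - 1) * x) (x / k) := by
    rw [mul_comm, mul_max_of_nonneg _ _ hx]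
    ring_nf
  have hQm : m * r Q < 1 := (le_ceil_one_div_sub_one_iff hm).mp hQ.1.2
  have hQm' : 1 ≤ m * r (Q + 1) := not_lt.mp fun h =>
    (hQ.2 ⟨Nat.le_add_left 1 Q, (le_ceil_one_div_sub_one_iff hm).mpr h⟩).not_gt Q.lt_succ_self
  rw [hmax _ (Nat.cast_nonneg _), max_lt_iff, div_lt_one hk'] at hQm
  refine ⟨by exact_mod_cast hQm.2, hQm.1, fun j hjk hj => ?_⟩
  have h : 1 ≤ m * j := hQm'.trans (by gcongr)
  rw [hmax _ (Nat.cast_nonneg _), le_max_iff, one_le_div hk'] at h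
  exact h.resolve_right (by exact_mod_cast hjk.not_ge)

theorem IPscore_le_sylvester {k : ℕ} {μ : ℝ} {r : ℕ → ℕ} {Q : ℕ} (hμ : 1 ≤ μ)
    (hr1 : r 1 = 1) (hrec : ∀ j ≥ 1, r (j + 1) = r j * (r j + 1)) (hQ : (μ - 1) * r Q ≤ 1)
    (hbeyond : ∀ j < k, r (Q + 1) ≤ j → 1 ≤ (μ - 1) * j) {z : ℕ → ℕ}
    (hz : IPcost k z < 1) :
    IPscore k μ z ≤ μ + ∑ i ∈ Icc 1 Q, itemGain μ (r i) := by
  have hgreedy (i) (hi : i ∈ Icc 1 Q) : 0 ≤ itemGain μ (r i) := by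
    obtain ⟨hpos, hle⟩ := mem_Icc.mp (sylvester_mem_Icc hr1 hrec hi)
    refine itemGain_nonneg hpos (le_trans ?_ hQ)
    exact mul_le_mul_of_nonneg_left (by exact_mod_cast hle) (by linarith)
  have hlarge (j) (hj : j ∈ itemsOf k z) (hQj : r (Q + 1) ≤ j) : itemGain μ j ≤ 0 := by
    have := mem_Icc.mp (mem_itemsOf hj)
    exact itemGain_nonpos (by omega) (hbeyond j (by omega) hQj)
  rw [IPscore_eq_add_sum_itemsOf]
  gcongr
  exact sum_itemGain_le_sylvester hμ hr1 hrec hgreedy hlarge le_rfl (by omega)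
    (by rwa [hr1, Nat.cast_one, div_one, ← IPcost_eq_sum_itemsOf])

theorem exists_IPscore_eq_sylvester {k : ℕ} (μ : ℝ) {r : ℕ → ℕ} {Q : ℕ} (hr1 : r 1 = 1)
    (hrec : ∀ j ≥ 1, r (j + 1) = r j * (r j + 1)) (hQ : r Q < k) :
    ∃ z, IPcost k z < 1 ∧ IPscore k μ z = μ + ∑ i ∈ Icc 1 Q, itemGain μ (r i) := by
  set G : Multiset ℕ := (Icc 1 Q).val.map r
  have hG : itemsOf k (G.count ·) = G := itemsOf_count fun j hj => by
    obtain ⟨i, hi, rfl⟩ := Multiset.mem_map.mp hj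
    have := mem_Icc.mp (sylvester_mem_Icc hr1 hrec hi)
    exact mem_Icc.mpr ⟨this.1, by omega⟩
  refine ⟨(G.count ·), ?_, ?_⟩
  · rw [IPcost_eq_sum_itemsOf, hG, Multiset.map_map, Finset.sum_map_val]
    simp only [Function.comp_apply, sum_itemCost_sylvester hr1 hrec, sub_lt_self_iff]
    have := sylvester_pos hr1 hrec (Nat.le_add_left 1 Q)
    positivity
  · rw [IPscore_eq_add_sum_itemsOf, hG, Multiset.map_map, Finset.sum_map_val]
    rfl

end IP

open IP

theorem IP_closed_form_general (k : ℕ) (μ : ℝ) (r : ℕ → ℕ) (Q : ℕ)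
    (hk : 2 ≤ k) (hμ1 : 1 ≤ μ)
    (hr1 : r 1 = 1) (hrec : ∀ j ≥ 1, r (j + 1) = r j * (r j + 1))
    (hQ : IsGreatest {j : ℕ | 1 ≤ j ∧
      r j ≤ ⌈1 / max (μ - 1) (1 / (k : ℝ))⌉₊ - 1} Q) :
    IPopt k μ = (∑ j ∈ Finset.Icc 1 (Q + 1), 1 / (r j : ℝ)) + (μ - 1) / (r (Q + 1) : ℝ) := by
  obtain ⟨hQk, hQμ, hbeyond⟩ := bounds_of_isGreatest_threshold (by omega) hQ
  obtain ⟨z, hz, hzscore⟩ := exists_IPscore_eq_sylvester μ hr1 hrec hQk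
  rw [IPopt, ← add_sum_itemGain_sylvester hr1 hrec]
  refine IsGreatest.csSup_eq ⟨⟨z, hz, hzscore.symm⟩, ?_⟩
  rintro _ ⟨z', hz', rfl⟩
  exact IPscore_le_sylvester hμ1 hr1 hrec hQμ.le hbeyond hz'

theorem IP_closed_form (k : ℕ) (μ : ℝ) (r : ℕ → ℕ) (Q : ℕ)
    (hk : 2 ≤ k) (hμ1 : 1 ≤ μ) (hμ2 : μ < 2)
    (hr1 : r 1 = 1) (hrec : ∀ j ≥ 1, r (j + 1) = r j * (r j + 1))
    (hQ : IsGreatest {j : ℕ | 1 ≤ j ∧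
      r j ≤ ⌈1 / max (μ - 1) (1 / (k : ℝ))⌉₊ - 1} Q) :
    IPopt k μ = (∑ j ∈ Finset.Icc 1 (Q + 1), 1 / (r j : ℝ)) + (μ - 1) / (r (Q + 1) : ℝ) :=
  IP_closed_form_general k μ r Q hk hμ1 hr1 hrec hQ
end

section
/- General monotonicity: let k ≥ 2 and let μ_k, μ_{k+1} satisfy (k+1)/k ≤ μ_{k+1} ≤ μ_k, k/(k−1) ≤ μ_k < 2, and 1/(μ_{k+1}−1) − 1/(μ_k−1) ≤ 1. Then opt(IP(k, μ_k)) ≥ opt(IP(k+1, μ_{k+1})). -/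
/-!
Every feasible `z` of `IP(k + 1, μ')` is feasible for `IP(k, μ)`, and its score does not drop:
the objective is `μ (1 - cost) + ∑ z_j / j`, which is monotone in `μ` on feasible points, and the
extra variable `z_k` of `IP(k + 1, μ')` contributes `z_k (1/k - μ'/(k+1)) ≤ 0` once
`μ' ≥ (k+1)/k`.
-/

open Finset

/-- The objective of `IP(k, μ)` without the `μ`-terms: `∑ z_j / j`. -/
noncomputable def IPgain (k : ℕ) (z : ℕ → ℕ) : ℝ :=
  ∑ j ∈ Icc 1 (k - 1), (z j : ℝ) / j

lemma IPscore_eq (k : ℕ) (μ : ℝ) (z : ℕ → ℕ) :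
    IPscore k μ z = μ * (1 - IPcost k z) + IPgain k z := by
  simp only [IPscore, IPcost, IPgain, mul_sub, mul_one, mul_sum]
  rw [sub_add_eq_add_sub, sub_eq_add_neg, ← sum_neg_distrib, add_assoc, ← sum_add_distrib]
  congr 1
  refine sum_congr rfl fun j _ => by ring

lemma IPcost_nonneg (k : ℕ) (z : ℕ → ℕ) : 0 ≤ IPcost k z :=
  sum_nonneg fun _ _ => by positivity

lemma IPgain_le_two_mul_IPcost (k : ℕ) (z : ℕ → ℕ) : IPgain k z ≤ 2 * IPcost k z := by
  rw [IPgain, IPcost, mul_sum]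
  refine sum_le_sum fun j hj => ?_
  have hj : (1 : ℝ) ≤ j := by exact_mod_cast (mem_Icc.mp hj).1
  have hz : (0 : ℝ) ≤ z j := by positivity
  rw [mul_div_assoc', div_le_div_iff₀ (by linarith) (by linarith)]
  nlinarith

/-- A feasible score is a convex combination of `μ` and a value at most `2`. -/
lemma IPscore_le_max {k : ℕ} {z : ℕ → ℕ} (μ : ℝ) (hz : IPcost k z ≤ 1) :
    IPscore k μ z ≤ max μ 2 := by
  have h0 := IPcost_nonneg k z
  have hμ := le_max_left μ 2
  have h2 := le_max_right μ 2
  rw [IPscore_eq]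
  nlinarith [IPgain_le_two_mul_IPcost k z]

lemma IPcost_succ {k : ℕ} (hk : 1 ≤ k) (z : ℕ → ℕ) :
    IPcost (k + 1) z = IPcost k z + (z k : ℝ) / (k + 1) := by
  obtain ⟨n, rfl⟩ := Nat.exists_eq_add_of_le' hk
  simp [IPcost, sum_Icc_succ_top]

lemma IPgain_succ {k : ℕ} (hk : 1 ≤ k) (z : ℕ → ℕ) :
    IPgain (k + 1) z = IPgain k z + (z k : ℝ) / k := by
  obtain ⟨n, rfl⟩ := Nat.exists_eq_add_of_le' hk
  simp [IPgain, sum_Icc_succ_top]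

lemma IPcost_le_IPcost_succ {k : ℕ} (hk : 1 ≤ k) (z : ℕ → ℕ) :
    IPcost k z ≤ IPcost (k + 1) z := by
  rw [IPcost_succ hk]
  exact le_add_of_nonneg_right (by positivity)

lemma IPscore_succ_le {k : ℕ} {μ μ' : ℝ} {z : ℕ → ℕ} (hk : 1 ≤ k)
    (hμ' : ((k : ℝ) + 1) / k ≤ μ') (hμ : μ' ≤ μ) (hz : IPcost (k + 1) z ≤ 1) :
    IPscore (k + 1) μ' z ≤ IPscore k μ z := by
  have hk0 : (0 : ℝ) < k := by exact_mod_cast hk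
  have htop : (z k : ℝ) / k ≤ μ' * ((z k : ℝ) / (k + 1)) := by
    rw [div_le_iff₀ hk0] at hμ'
    rw [mul_div_assoc', div_le_div_iff₀ hk0 (by linarith)]
    nlinarith [(Nat.cast_nonneg (z k) : (0 : ℝ) ≤ z k)]
  have hslack : (z k : ℝ) / (k + 1) ≤ 1 - IPcost k z := by
    rw [IPcost_succ hk] at hz
    linarith
  have htop0 : (0 : ℝ) ≤ (z k : ℝ) / (k + 1) := by positivity
  rw [IPscore_eq, IPscore_eq, IPcost_succ hk, IPgain_succ hk]
  nlinarith [mul_le_mul_of_nonneg_right hμ (htop0.trans hslack)]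

theorem IP_general_monotonicity_general (k : ℕ) (μk μk1 : ℝ) (hk : 2 ≤ k)
    (h1 : ((k : ℝ) + 1) / (k : ℝ) ≤ μk1) (h2 : μk1 ≤ μk) :
    IPopt (k + 1) μk1 ≤ IPopt k μk := by
  have hbdd : BddAbove {s | ∃ z : ℕ → ℕ, IPcost k z < 1 ∧ s = IPscore k μk z} :=
    ⟨max μk 2, by rintro s ⟨z, hz, rfl⟩; exact IPscore_le_max μk hz.le⟩
  refine csSup_le ⟨_, 0, by simp [IPcost], rfl⟩ ?_
  rintro s ⟨z, hz, rfl⟩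
  refine le_csSup_of_le hbdd ⟨z, ?_, rfl⟩ (IPscore_succ_le (by omega) h1 h2 hz.le)
  exact (IPcost_le_IPcost_succ (by omega) z).trans_lt hz

theorem IP_general_monotonicity (k : ℕ) (μk μk1 : ℝ) (hk : 2 ≤ k)
    (h1 : ((k : ℝ) + 1) / (k : ℝ) ≤ μk1) (h2 : μk1 ≤ μk)
    (h3 : (k : ℝ) / ((k : ℝ) - 1) ≤ μk) (h4 : μk < 2)
    (h5 : 1 / (μk1 - 1) - 1 / (μk - 1) ≤ 1) :
    IPopt (k + 1) μk1 ≤ IPopt k μk :=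
  IP_general_monotonicity_general k μk μk1 hk h1 h2
end

section
/- With μ_k = k/(k−1) and T_k = opt(IP(k, μ_k)), the limit T_∞ = lim_{k→∞} T_k exists and equals S_∞ = ∑_{j=1}^∞ 1/r_j, and S_{10} ≤ T_∞ ≤ S_{10} + 1/(r_{10}(r_9 + 1)); in particular T_∞ ≈ 1.6910302 satisfies 1.69103 < T_∞ < 1.69104. -/
/-!
Feasibility of the greedy solution `z = 𝟙{r₁, …, r_t}` (for `r_t < k`) follows from the
telescoping identity `∑_{i ≤ t} 1/(r_i + 1) = 1 - 1/r_{t+1}`; its score is `S_t + μ/r_{t+1}`,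
so `T_k ≥ S_t`. Conversely, for `μ ≥ 1` the score of a feasible `z` is at most
`μ + ∑ z_j/(j(j+1))`, and an exchange argument bounds this sum: if `∑ z_j/(j+1) < 1/r_m`, then
either `r_m` occurs in `z`, necessarily once, and removing it leaves cost `< 1/r_{m+1}`, or every
`j` exceeds `r_m` and the sum is below `1/(r_m(r_m+1)) = 1/r_{m+1}`. Starting at `m = 1` this
gives `T_k ≤ S_∞ + 1/(k-1)`. Finally `S_t + 2/r_{t+1}` decreases in `t`, which bounds the tail
`S_∞ - S_t` and yields the numerical enclosure from `S_6`.
-/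

namespace IPLimit

open Finset Filter Topology

variable {r : ℕ → ℕ}

noncomputable def recipSum (r : ℕ → ℕ) (t : ℕ) : ℝ := ∑ j ∈ Icc 1 t, 1 / (r j : ℝ)

-- `S_∞`; the supremum is not a junk value because the partial sums are bounded
-- (`bddAbove_range_recipSum`).
noncomputable def recipSumLim (r : ℕ → ℕ) : ℝ := ⨆ t, recipSum r t

theorem one_le_r (h0 : 0 < r 1) (hrec : ∀ j ≥ 1, r (j + 1) = r j * (r j + 1))
    {j : ℕ} (hj : 1 ≤ j) : 1 ≤ r j := by
  induction j, hj using Nat.le_induction with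
  | base => exact h0
  | succ n hn ih => rw [hrec n hn]; nlinarith

theorem r_succ_cast (hrec : ∀ j ≥ 1, r (j + 1) = r j * (r j + 1)) {j : ℕ} (hj : 1 ≤ j) :
    (r (j + 1) : ℝ) = r j * (r j + 1) := by
  rw [hrec j hj]; push_cast; ring

theorem strictMonoOn_r (h0 : 0 < r 1) (hrec : ∀ j ≥ 1, r (j + 1) = r j * (r j + 1)) :
    StrictMonoOn r (Set.Ici 1) :=
  strictMonoOn_of_lt_add_one Set.ordConnected_Ici fun j _ hj _ => by
    have := one_le_r h0 hrec hj
    rw [hrec j hj]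
    nlinarith

theorem inv_add_one_add_inv_r_succ (h0 : 0 < r 1) (hrec : ∀ j ≥ 1, r (j + 1) = r j * (r j + 1))
    {j : ℕ} (hj : 1 ≤ j) : 1 / ((r j : ℝ) + 1) + 1 / r (j + 1) = 1 / r j := by
  have : (0 : ℝ) < r j := by exact_mod_cast one_le_r h0 hrec hj
  rw [r_succ_cast hrec hj]
  field_simp

theorem sum_inv_r_add_one_add_inv (h0 : 0 < r 1) (hrec : ∀ j ≥ 1, r (j + 1) = r j * (r j + 1))
    (t : ℕ) : ∑ i ∈ Icc 1 t, 1 / ((r i : ℝ) + 1) + 1 / r (t + 1) = 1 / r 1 := by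
  induction t with
  | zero => simp
  | succ t ih =>
    rw [sum_Icc_succ_top (by omega), add_assoc, inv_add_one_add_inv_r_succ h0 hrec (by omega), ih]

theorem recipSum_succ (t : ℕ) : recipSum r (t + 1) = recipSum r t + 1 / r (t + 1) :=
  sum_Icc_succ_top (by omega) _

theorem recipSum_monotone : Monotone (recipSum r) :=
  monotone_nat_of_le_succ fun t => by
    rw [recipSum_succ]
    have : (0 : ℝ) ≤ 1 / r (t + 1) := by positivity
    linarith

theorem antitone_recipSum_add_two_div (h0 : 0 < r 1)
    (hrec : ∀ j ≥ 1, r (j + 1) = r j * (r j + 1)) :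
    Antitone fun t => recipSum r t + 2 / r (t + 1) :=
  antitone_nat_of_succ_le fun t => by
    have hid := inv_add_one_add_inv_r_succ h0 hrec (j := t + 1) (by omega)
    have ha : (1 : ℝ) ≤ r (t + 1) := by exact_mod_cast one_le_r h0 hrec (j := t + 1) (by omega)
    have hle : 1 / (r (t + 1) : ℝ) ≤ 2 / ((r (t + 1) : ℝ) + 1) := by
      rw [div_le_div_iff₀ (by positivity) (by positivity)]
      linarith
    simp only [recipSum_succ]
    linear_combination 2 * hid + hle

theorem recipSum_le_add_two_div (h0 : 0 < r 1) (hrec : ∀ j ≥ 1, r (j + 1) = r j * (r j + 1))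
    (m t : ℕ) : recipSum r t ≤ recipSum r m + 2 / r (m + 1) := by
  rcases le_total t m with h | h
  · have : (0 : ℝ) ≤ 2 / r (m + 1) := by positivity
    linarith [recipSum_monotone (r := r) h]
  · have : (0 : ℝ) ≤ 2 / r (t + 1) := by positivity
    linarith [antitone_recipSum_add_two_div h0 hrec h]

theorem bddAbove_range_recipSum (h0 : 0 < r 1) (hrec : ∀ j ≥ 1, r (j + 1) = r j * (r j + 1)) :
    BddAbove (Set.range (recipSum r)) :=
  ⟨_, Set.forall_mem_range.2 (recipSum_le_add_two_div h0 hrec 0)⟩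

theorem tendsto_recipSum (h0 : 0 < r 1) (hrec : ∀ j ≥ 1, r (j + 1) = r j * (r j + 1)) :
    Tendsto (recipSum r) atTop (𝓝 (recipSumLim r)) :=
  tendsto_atTop_ciSup recipSum_monotone (bddAbove_range_recipSum h0 hrec)

theorem recipSum_le_recipSumLim (h0 : 0 < r 1) (hrec : ∀ j ≥ 1, r (j + 1) = r j * (r j + 1))
    (t : ℕ) : recipSum r t ≤ recipSumLim r :=
  le_ciSup (bddAbove_range_recipSum h0 hrec) t

theorem recipSumLim_le_add_two_div (h0 : 0 < r 1) (hrec : ∀ j ≥ 1, r (j + 1) = r j * (r j + 1))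
    (m : ℕ) : recipSumLim r ≤ recipSum r m + 2 / r (m + 1) :=
  ciSup_le (recipSum_le_add_two_div h0 hrec m)

theorem recipSumLim_le_add_inv_mul (h0 : 0 < r 1) (hrec : ∀ j ≥ 1, r (j + 1) = r j * (r j + 1))
    {m : ℕ} (hm : 2 ≤ m) :
    recipSumLim r ≤ recipSum r (m + 1) + 1 / (r (m + 1) * (r m + 1)) := by
  have ha : (2 : ℝ) ≤ r m := by
    have := strictMonoOn_r h0 hrec (Set.mem_Ici.2 le_rfl) (Set.mem_Ici.2 (by omega))
      (show 1 < m by omega)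
    exact_mod_cast (show 2 ≤ r m by omega)
  have hb := r_succ_cast hrec (j := m) (by omega)
  have hc := r_succ_cast hrec (j := m + 1) (by omega)
  have htail : 2 / (r (m + 2) : ℝ) ≤ 1 / (r (m + 1) * (r m + 1)) := by
    rw [hc, hb, div_le_div_iff₀ (by positivity) (by positivity)]
    have : (0 : ℝ) ≤ r m * (r m + 1) * (r m ^ 2 - r m - 1) := by
      apply mul_nonneg (by positivity)
      nlinarith
    nlinarith
  linarith [recipSumLim_le_add_two_div h0 hrec (m + 1)]


-- On `s = Icc 1 (k - 1)`, `cost` is `IPcost k`, and `IPscore k 1 = 1 + gain`.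
noncomputable def cost (s : Finset ℕ) (z : ℕ → ℕ) : ℝ := ∑ j ∈ s, (z j : ℝ) / (j + 1)

noncomputable def gain (s : Finset ℕ) (z : ℕ → ℕ) : ℝ := ∑ j ∈ s, (z j : ℝ) / (j * (j + 1))

theorem div_le_cost {s : Finset ℕ} {z : ℕ → ℕ} {j : ℕ} (hj : j ∈ s) :
    (z j : ℝ) / (j + 1) ≤ cost s z :=
  single_le_sum (f := fun i => (z i : ℝ) / (i + 1)) (fun i _ => by positivity) hj

theorem le_of_cost_lt {s : Finset ℕ} {z : ℕ → ℕ} {a j : ℕ} (ha : 0 < a)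
    (hc : cost s z < 1 / a) (hj : j ∈ s) (hz : z j ≠ 0) : a ≤ j := by
  have h1 : (1 : ℝ) ≤ z j := by exact_mod_cast Nat.one_le_iff_ne_zero.2 hz
  have : 1 / ((j : ℝ) + 1) < 1 / a :=
    lt_of_le_of_lt (by gcongr) ((div_le_cost hj).trans_lt hc)
  rw [one_div_lt_one_div (by positivity) (by exact_mod_cast ha)] at this
  have : a < j + 1 := by exact_mod_cast this
  omega

theorem eq_one_of_cost_lt {s : Finset ℕ} {z : ℕ → ℕ} {a : ℕ} (ha : 1 ≤ a)
    (hc : cost s z < 1 / a) (hs : a ∈ s) (hz : z a ≠ 0) : z a = 1 := by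
  have ha' : (1 : ℝ) ≤ a := by exact_mod_cast ha
  have := (div_le_cost hs).trans_lt hc
  rw [div_lt_div_iff₀ (by positivity) (by positivity)] at this
  have : (z a : ℝ) < 2 := by nlinarith
  have : z a < 2 := by exact_mod_cast this
  omega

theorem gain_le_cost_div {s : Finset ℕ} {z : ℕ → ℕ} (a : ℕ) (hs : ∀ j ∈ s, z j ≠ 0 → a < j) :
    gain s z ≤ cost s z / (a + 1) := by
  rw [cost, sum_div]
  refine sum_le_sum fun j hj => ?_
  rcases eq_or_ne (z j) 0 with hz | hz
  · simp [hz]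
  · have : (a : ℝ) + 1 ≤ j := by exact_mod_cast hs j hj hz
    rw [div_div, mul_comm]
    gcongr

theorem gain_le_recipSumLim_sub (h0 : 0 < r 1) (hrec : ∀ j ≥ 1, r (j + 1) = r j * (r j + 1))
    (s : Finset ℕ) (z : ℕ → ℕ) {m : ℕ} (hm : 1 ≤ m) (hc : cost s z < 1 / r m) :
    gain s z ≤ recipSumLim r - recipSum r m := by
  induction s using Finset.strongInduction generalizing m with
  | H s ih =>
  have ha : 0 < r m := one_le_r h0 hrec hm
  have hnext : 1 / ((r m : ℝ) * (r m + 1)) = 1 / r (m + 1) := by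
    rw [r_succ_cast hrec hm]
  have hlim := recipSum_le_recipSumLim h0 hrec (m + 1)
  rw [recipSum_succ] at hlim
  by_cases hmem : r m ∈ s ∧ z (r m) ≠ 0
  · obtain ⟨hmem, hz⟩ := hmem
    have hc_split := add_sum_erase s (fun j => (z j : ℝ) / (j + 1)) hmem
    have hg_split := add_sum_erase s (fun j => (z j : ℝ) / (j * (j + 1))) hmem
    have hz1 := eq_one_of_cost_lt (one_le_r h0 hrec hm) hc hmem hz
    have hc' : cost (s.erase (r m)) z < 1 / r (m + 1) := by
      have hid := inv_add_one_add_inv_r_succ h0 hrec hm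
      simp only [hz1, Nat.cast_one] at hc_split
      unfold cost at hc ⊢; linarith
    have := ih _ (erase_ssubset hmem) (by omega) hc'
    rw [hz1, Nat.cast_one, hnext] at hg_split
    unfold gain at this ⊢
    rw [recipSum_succ] at this
    linarith
  · have hs : ∀ j ∈ s, z j ≠ 0 → r m < j := fun j hj hzj =>
      (le_of_cost_lt ha hc hj hzj).lt_of_ne
        fun h => hmem ⟨h ▸ hj, h ▸ hzj⟩
    calc gain s z ≤ cost s z / (r m + 1) := gain_le_cost_div _ hs
      _ ≤ 1 / r m / (r m + 1) := by gcongr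
      _ = 1 / r (m + 1) := by rw [div_div, hnext]
      _ ≤ recipSumLim r - recipSum r m := by linarith

theorem IPscore_le_add_gain {k : ℕ} {μ : ℝ} (hμ : 1 ≤ μ) (z : ℕ → ℕ) :
    IPscore k μ z ≤ μ + gain (Icc 1 (k - 1)) z := by
  unfold IPscore gain
  gcongr with j hj
  have hj1 : (1 : ℝ) ≤ j := by exact_mod_cast (mem_Icc.1 hj).1
  have hsplit : 1 / (j : ℝ) - 1 / (j + 1) = 1 / (j * (j + 1)) := by field_simp; ring
  have : 1 / ((j : ℝ) + 1) ≤ μ / (j + 1) := by gcongr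
  calc (z j : ℝ) * (1 / j - μ / (j + 1)) ≤ z j * (1 / (j * (j + 1))) := by gcongr; linarith
    _ = z j / (j * (j + 1)) := mul_one_div _ _

theorem recipSum_one (hr1 : r 1 = 1) : recipSum r 1 = 1 := by
  simp [recipSum, hr1]

theorem IPscore_le_of_IPcost_lt (hr1 : r 1 = 1) (hrec : ∀ j ≥ 1, r (j + 1) = r j * (r j + 1))
    {k : ℕ} {μ : ℝ} (hμ : 1 ≤ μ) {z : ℕ → ℕ} (hz : IPcost k z < 1) :
    IPscore k μ z ≤ μ + recipSumLim r - 1 := by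
  have := gain_le_recipSumLim_sub (by omega) hrec (Icc 1 (k - 1)) z le_rfl
    (by rwa [hr1, Nat.cast_one, div_one])
  rw [recipSum_one hr1] at this
  linarith [IPscore_le_add_gain (k := k) hμ z]

theorem IPscore_zero_mem (k : ℕ) (μ : ℝ) :
    μ ∈ {s | ∃ z : ℕ → ℕ, IPcost k z < 1 ∧ s = IPscore k μ z} :=
  ⟨fun _ => 0, by simp [IPcost], by simp [IPscore]⟩

theorem IPopt_le (hr1 : r 1 = 1) (hrec : ∀ j ≥ 1, r (j + 1) = r j * (r j + 1))
    {k : ℕ} {μ : ℝ} (hμ : 1 ≤ μ) : IPopt k μ ≤ μ + recipSumLim r - 1 :=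
  csSup_le ⟨μ, IPscore_zero_mem k μ⟩ fun _ ⟨_, hz, hs⟩ =>
    hs ▸ IPscore_le_of_IPcost_lt hr1 hrec hμ hz

theorem bddAbove_IPscores (hr1 : r 1 = 1) (hrec : ∀ j ≥ 1, r (j + 1) = r j * (r j + 1))
    {k : ℕ} {μ : ℝ} (hμ : 1 ≤ μ) :
    BddAbove {s | ∃ z : ℕ → ℕ, IPcost k z < 1 ∧ s = IPscore k μ z} :=
  ⟨_, fun _ ⟨_, hz, hs⟩ => hs ▸ IPscore_le_of_IPcost_lt hr1 hrec hμ hz⟩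

def greedySolution (r : ℕ → ℕ) (t j : ℕ) : ℕ := if j ∈ (Icc 1 t).image r then 1 else 0

theorem sum_greedySolution_mul (h0 : 0 < r 1) (hrec : ∀ j ≥ 1, r (j + 1) = r j * (r j + 1))
    {k t : ℕ} (ht : r t < k) (w : ℕ → ℝ) :
    ∑ j ∈ Icc 1 (k - 1), (greedySolution r t j : ℝ) * w j = ∑ i ∈ Icc 1 t, w (r i) := by
  have hmono := strictMonoOn_r h0 hrec
  have hsub : (Icc 1 t).image r ⊆ Icc 1 (k - 1) := by
    intro j hj
    obtain ⟨i, hi, rfl⟩ := mem_image.1 hj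
    obtain ⟨hi1, hit⟩ := mem_Icc.1 hi
    have := hmono.monotoneOn (Set.mem_Ici.2 hi1) (Set.mem_Ici.2 (hi1.trans hit)) hit
    have := one_le_r h0 hrec hi1
    exact mem_Icc.2 ⟨by omega, by omega⟩
  simp only [greedySolution, Nat.cast_ite, Nat.cast_one, Nat.cast_zero, ite_mul, one_mul,
    zero_mul]
  rw [sum_ite_mem, inter_eq_right.2 hsub,
    sum_image (hmono.injOn.mono fun i hi => Set.mem_Ici.2 (mem_Icc.1 hi).1)]

theorem IPcost_greedySolution (hr1 : r 1 = 1) (hrec : ∀ j ≥ 1, r (j + 1) = r j * (r j + 1))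
    {k t : ℕ} (ht : r t < k) : IPcost k (greedySolution r t) = 1 - 1 / r (t + 1) := by
  have h0 : 0 < r 1 := by omega
  have := sum_inv_r_add_one_add_inv h0 hrec t
  rw [hr1, Nat.cast_one, div_one] at this
  unfold IPcost
  simp_rw [div_eq_mul_one_div (greedySolution r t _ : ℝ)]
  rw [sum_greedySolution_mul h0 hrec ht]
  linarith

theorem IPscore_greedySolution (hr1 : r 1 = 1) (hrec : ∀ j ≥ 1, r (j + 1) = r j * (r j + 1))
    {k t : ℕ} (ht : r t < k) (μ : ℝ) :
    IPscore k μ (greedySolution r t) = recipSum r t + μ / r (t + 1) := by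
  have h0 : 0 < r 1 := by omega
  have := sum_inv_r_add_one_add_inv h0 hrec t
  rw [hr1, Nat.cast_one, div_one] at this
  unfold IPscore
  rw [sum_greedySolution_mul h0 hrec ht, sum_sub_distrib]
  simp_rw [div_eq_mul_one_div μ]
  rw [← mul_sum, recipSum]
  linear_combination (-μ) * this

theorem recipSum_le_IPopt (hr1 : r 1 = 1) (hrec : ∀ j ≥ 1, r (j + 1) = r j * (r j + 1))
    {k t : ℕ} (ht : r t < k) {μ : ℝ} (hμ : 1 ≤ μ) : recipSum r t ≤ IPopt k μ := by
  have hmem : IPscore k μ (greedySolution r t) ∈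
      {s | ∃ z : ℕ → ℕ, IPcost k z < 1 ∧ s = IPscore k μ z} := by
    refine ⟨_, ?_, rfl⟩
    rw [IPcost_greedySolution hr1 hrec ht]
    have : (0 : ℝ) < 1 / r (t + 1) := by
      have := one_le_r (by omega) hrec (j := t + 1) (by omega)
      positivity
    linarith
  have hle := le_csSup (bddAbove_IPscores hr1 hrec hμ) hmem
  rw [IPscore_greedySolution hr1 hrec ht] at hle
  have : 0 ≤ μ / r (t + 1) := by positivity
  exact le_trans (by linarith) hle

theorem tendsto_IPopt (hr1 : r 1 = 1) (hrec : ∀ j ≥ 1, r (j + 1) = r j * (r j + 1)) :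
    Tendsto (fun k : ℕ => IPopt k ((k : ℝ) / ((k : ℝ) - 1))) atTop (𝓝 (recipSumLim r)) := by
  have hμ : ∀ᶠ k : ℕ in atTop, 1 ≤ (k : ℝ) / ((k : ℝ) - 1) := by
    filter_upwards [eventually_ge_atTop 2] with k hk
    have : (2 : ℝ) ≤ k := by exact_mod_cast hk
    rw [le_div_iff₀ (by linarith)]
    linarith
  have hμ_lim : Tendsto (fun k : ℕ => (k : ℝ) / ((k : ℝ) - 1)) atTop (𝓝 1) := by
    simpa [sub_eq_add_neg] using tendsto_natCast_div_add_atTop (-1 : ℝ)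
  rw [tendsto_order]
  constructor
  · intro a ha
    obtain ⟨t, ht⟩ := ((tendsto_order.1 (tendsto_recipSum (by omega) hrec)).1 a ha).exists
    filter_upwards [hμ, eventually_gt_atTop (r t)] with k hk hkt
    exact ht.trans_le (recipSum_le_IPopt hr1 hrec hkt hk)
  · intro a ha
    have : Tendsto (fun k : ℕ => (k : ℝ) / ((k : ℝ) - 1) + recipSumLim r - 1) atTop
        (𝓝 (recipSumLim r)) := by
      simpa using (hμ_lim.add_const (recipSumLim r)).sub_const 1
    filter_upwards [hμ, (tendsto_order.1 this).2 a ha] with k hk hka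
    exact (IPopt_le hr1 hrec hk).trans_lt hka

theorem recipSumLim_mem_Ioo (hr1 : r 1 = 1) (hrec : ∀ j ≥ 1, r (j + 1) = r j * (r j + 1)) :
    1.69103 < recipSumLim r ∧ recipSumLim r < 1.69104 := by
  have h2 : r 2 = 2 := by rw [hrec 1 le_rfl, hr1]
  have h3 : r 3 = 6 := by rw [hrec 2 (by omega), h2]
  have h4 : r 4 = 42 := by rw [hrec 3 (by omega), h3]
  have h5 : r 5 = 1806 := by rw [hrec 4 (by omega), h4]
  have h6 : r 6 = 3263442 := by rw [hrec 5 (by omega), h5]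
  have h7 : r 7 = 3263442 * 3263443 := by rw [hrec 6 (by omega), h6]
  have hS6 : recipSum r 6 = 1 + 1 / 2 + 1 / 6 + 1 / 42 + 1 / 1806 + 1 / 3263442 := by
    simp [recipSum, sum_Icc_succ_top, hr1, h2, h3, h4, h5, h6]
  have hlo := recipSum_le_recipSumLim (by omega) hrec 6
  have hhi := recipSumLim_le_add_two_div (by omega) hrec 6
  rw [hS6] at hlo hhi
  rw [h7] at hhi
  constructor <;> norm_num at hlo hhi ⊢ <;> linarith

end IPLimit

open IPLimit in
theorem T_infinity (r : ℕ → ℕ)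
    (hr1 : r 1 = 1) (hrec : ∀ j ≥ 1, r (j + 1) = r j * (r j + 1)) :
    ∃ L : ℝ,
      Filter.Tendsto (fun k : ℕ => IPopt k ((k : ℝ) / ((k : ℝ) - 1)))
        Filter.atTop (nhds L) ∧
      Filter.Tendsto (fun t : ℕ => ∑ j ∈ Finset.Icc 1 t, 1 / (r j : ℝ))
        Filter.atTop (nhds L) ∧
      (∑ j ∈ Finset.Icc 1 10, 1 / (r j : ℝ)) ≤ L ∧
      L ≤ (∑ j ∈ Finset.Icc 1 10, 1 / (r j : ℝ)) + 1 / ((r 10 : ℝ) * ((r 9 : ℝ) + 1)) ∧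
      1.69103 < L ∧ L < 1.69104 := by
  have h0 : 0 < r 1 := by omega
  exact ⟨recipSumLim r, tendsto_IPopt hr1 hrec, tendsto_recipSum h0 hrec,
    recipSum_le_recipSumLim h0 hrec 10, recipSumLim_le_add_inv_mul h0 hrec (m := 9) (by norm_num),
    recipSumLim_mem_Ioo hr1 hrec⟩
end
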